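/- Let r be a positive integer and let T_{2,2r} = ⟨a, b ∣ (ab)ʳ = (ba)ʳ⟩. The quotient of T_{2,2r} by the normal closure of the image of (ab)ʳ is isomorphic to the free product ℤ ∗ (ℤ/rℤ). -/

import Mathlib

/-- Relator of the toric link group `T_{2,2r} = ⟨a, b ∣ (ab)ʳ = (ba)ʳ⟩`,
with `a = 0`, `b = 1`. -/
def toric2Rels (r : ℕ) : Set (FreeGroup (Fin 2)) :=
  {(FreeGroup.of 0 * FreeGroup.of 1) ^ r * ((FreeGroup.of 1 * FreeGroup.of 0) ^ r)⁻¹}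

/-! Modulo `(ab)ʳ` the toric relator `(ab)ʳ((ba)ʳ)⁻¹` is redundant, because
`(ba)ʳ = a⁻¹(ab)ʳa`; so the quotient is `⟨a, b ∣ (ab)ʳ⟩`. In the generators `a` and
`c = ab` this reads `⟨a, c ∣ cʳ⟩`, which is `ℤ ∗ ℤ/r`. -/

open Multiplicative Monoid Subgroup

section Cyclic

variable {G : Type*} [Group G]

theorem MonoidHom.ext_mzmod {n : ℕ} {f g : Multiplicative (ZMod n) →* G}
    (h : f (ofAdd 1) = g (ofAdd 1)) : f = g := by
  refine MonoidHom.ext fun x => ?_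
  obtain ⟨k, hk⟩ := ZMod.intCast_surjective (toAdd x)
  have hx : x = ofAdd (1 : ZMod n) ^ k := by
    rw [← ofAdd_zsmul, zsmul_one, hk, ofAdd_toAdd]
  rw [hx, map_zpow, map_zpow, h]

def zmodPowersHom (n : ℕ) (g : G) (hg : g ^ n = 1) : Multiplicative (ZMod n) →* G :=
  AddMonoidHom.toMultiplicativeLeft
    (ZMod.lift n ⟨zmultiplesHom (Additive G) (Additive.ofMul g), by
      simp only [zmultiplesHom_apply, ← ofMul_zpow, zpow_natCast, hg, ofMul_one]⟩)

@[simp]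
theorem zmodPowersHom_intCast (n : ℕ) (g : G) (hg : g ^ n = 1) (k : ℤ) :
    zmodPowersHom n g hg (ofAdd (k : ZMod n)) = g ^ k := by
  simp [zmodPowersHom]

@[simp]
theorem zmodPowersHom_one (n : ℕ) (g : G) (hg : g ^ n = 1) :
    zmodPowersHom n g hg (ofAdd 1) = g := by
  simpa using zmodPowersHom_intCast n g hg 1

end Cyclic

theorem Subgroup.pow_swap_mul_mem_normalClosure {G : Type*} [Group G] (a b : G) (n : ℕ) :
    (b * a) ^ n ∈ normalClosure {(a * b) ^ n} := by
  have hconj : (b * a) ^ n = a⁻¹ * (a * b) ^ n * a⁻¹⁻¹ := by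
    rw [← conj_pow]
    congr 1
    group
  rw [hconj]
  exact normalClosure_normal.conj_mem _ (subset_normalClosure (Set.mem_singleton _)) _

namespace PresentedGroup

def quotientNormalClosureMkEquiv {α : Type*} {rels S : Set (FreeGroup α)}
    (h : rels ⊆ normalClosure S) :
    PresentedGroup rels ⧸ normalClosure (mk rels '' S) ≃* PresentedGroup S :=
  haveI : ((normalClosure S).map (mk rels)).Normal :=
    normalClosure_normal.map (mk rels) (mk_surjective rels)
  (QuotientGroup.quotientMulEquivOfEq
      (map_normalClosure S (mk rels) (mk_surjective rels)).symm).trans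
    (QuotientGroup.quotientQuotientEquivQuotient _ _ (normalClosure_le_normal h))

end PresentedGroup

def mulPowRels (n : ℕ) : Set (FreeGroup (Fin 2)) :=
  {(FreeGroup.of 0 * FreeGroup.of 1) ^ n}

namespace MulPowRels

open PresentedGroup Coprod

variable (n : ℕ)

theorem of_mul_of_pow_eq_one :
    (of 0 * of 1 : PresentedGroup (mulPowRels n)) ^ n = 1 :=
  one_of_mem (Set.mem_singleton _)

def toCoprod :
    PresentedGroup (mulPowRels n) →* Coprod (Multiplicative ℤ) (Multiplicative (ZMod n)) :=
  toGroup (f := ![inl (ofAdd 1), (inl (ofAdd 1))⁻¹ * inr (ofAdd 1)]) <| by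
    rintro _ rfl
    rw [map_pow, map_mul, FreeGroup.lift_apply_of, FreeGroup.lift_apply_of]
    simp [← map_pow, ← ofAdd_nsmul]

def ofCoprod :
    Coprod (Multiplicative ℤ) (Multiplicative (ZMod n)) →* PresentedGroup (mulPowRels n) :=
  Coprod.lift (zpowersHom _ (of 0)) (zmodPowersHom n _ (of_mul_of_pow_eq_one n))

def equivCoprod :
    PresentedGroup (mulPowRels n) ≃* Coprod (Multiplicative ℤ) (Multiplicative (ZMod n)) :=
  MonoidHom.toMulEquiv (toCoprod n) (ofCoprod n)
    (PresentedGroup.ext fun i => by fin_cases i <;> simp [toCoprod, ofCoprod])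
    (Coprod.hom_ext (MonoidHom.ext_mint (by simp [toCoprod, ofCoprod]))
      (MonoidHom.ext_mzmod (by simp [toCoprod, ofCoprod])))

end MulPowRels

theorem toric2Rels_subset_normalClosure (r : ℕ) :
    toric2Rels r ⊆ normalClosure (mulPowRels r) := by
  rintro _ rfl
  exact mul_mem (subset_normalClosure (Set.mem_singleton _))
    (inv_mem (pow_swap_mul_mem_normalClosure _ _ r))

theorem stmt_14_general (r : ℕ) :
    Nonempty
      ((PresentedGroup (toric2Rels r) ⧸
          Subgroup.normalClosure
            {(PresentedGroup.of 0 * PresentedGroup.of 1 :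
                PresentedGroup (toric2Rels r)) ^ r}) ≃*
        Monoid.Coprod (Multiplicative ℤ) (Multiplicative (ZMod r))) := by
  have himage : {(PresentedGroup.of 0 * PresentedGroup.of 1 :
      PresentedGroup (toric2Rels r)) ^ r} = PresentedGroup.mk _ '' mulPowRels r := by
    rw [mulPowRels, Set.image_singleton, map_pow, map_mul]
    rfl
  rw [himage]
  exact ⟨(PresentedGroup.quotientNormalClosureMkEquiv (toric2Rels_subset_normalClosure r)).trans
    (MulPowRels.equivCoprod r)⟩

/-- The quotient of `T_{2,2r}` by the normal closure of `(ab)ʳ` is isomorphic to the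
free product `ℤ ∗ (ℤ/rℤ)`. -/
theorem stmt_14 (r : ℕ) (hr : 0 < r) :
    Nonempty
      ((PresentedGroup (toric2Rels r) ⧸
          Subgroup.normalClosure
            {(PresentedGroup.of 0 * PresentedGroup.of 1 :
                PresentedGroup (toric2Rels r)) ^ r}) ≃*
        Monoid.Coprod (Multiplicative ℤ) (Multiplicative (ZMod r))) :=
  stmt_14_general r
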